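/- Let H: E × E* → ℝ be of class C¹ with Hamiltonian vector field X_H = (X¹, X²), and let γ: E → E* be a C¹ closed one-form (dγ_q = 0 for all q). Define X_H^γ: E → E by X_H^γ(q) = X¹(q, γ(q)) (the projection to E of X_H along γ). Then the following two assertions are equivalent: (i) X_H^γ and X_H are γ-related, i.e. Dγ̃(q)(X_H^γ(q)) = X_H(q, γ(q)) for all q ∈ E; (ii) D(H ∘ γ̃)(q) = 0 for all q ∈ E, i.e. the function q ↦ H(q, γ(q)) has vanishing derivative (the geometric Hamilton–Jacobi equation d(H∘γ) = 0). -/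

import Mathlib

/-!
Differentiating `q ↦ H(q, γ q)` in the direction `x` gives `DH(q, γ q)(x, Dγ(q) x)`, and the
defining identity of `X_H` rewrites this as `Dγ(q) x (X¹) - X²(x)`. Closedness of `γ` makes
`Dγ(q)` a symmetric bilinear form, so `d(H ∘ γ̃)(q) = Dγ(q) X¹ - X²`, which vanishes exactly when
`X_H(q, γ q) = (X¹, Dγ(q) X¹)`, i.e. when `X_H^γ` and `X_H` are `γ`-related at `q`.
-/

/-- The canonical symplectic form on `E × E*`. -/
def canSymp (E : Type*) [NormedAddCommGroup E] [NormedSpace ℝ E] :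
    (E × (E →L[ℝ] ℝ)) → (E × (E →L[ℝ] ℝ)) → ℝ :=
  fun v w => w.2 v.1 - v.2 w.1

theorem fderiv_comp_graph {𝕜 E F G : Type*} [NontriviallyNormedField 𝕜]
    [NormedAddCommGroup E] [NormedSpace 𝕜 E] [NormedAddCommGroup F] [NormedSpace 𝕜 F]
    [NormedAddCommGroup G] [NormedSpace 𝕜 G] {f : E × F → G} {γ : E → F} {q : E}
    (hf : DifferentiableAt 𝕜 f (q, γ q)) (hγ : DifferentiableAt 𝕜 γ q) :
    fderiv 𝕜 (fun q' => f (q', γ q')) q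
      = (fderiv 𝕜 f (q, γ q)).comp ((ContinuousLinearMap.id 𝕜 E).prod (fderiv 𝕜 γ q)) :=
  (hf.hasFDerivAt.comp q ((hasFDerivAt_id q).prodMk hγ.hasFDerivAt)).fderiv

theorem fderiv_hamiltonian_comp_section {E : Type*} [NormedAddCommGroup E] [NormedSpace ℝ E]
    {H : E × (E →L[ℝ] ℝ) → ℝ} {XH : E × (E →L[ℝ] ℝ) → E × (E →L[ℝ] ℝ)}
    (hXH : ∀ z v, canSymp E (XH z) v = fderiv ℝ H z v) {γ : E → E →L[ℝ] ℝ} {q : E}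
    (hH : DifferentiableAt ℝ H (q, γ q)) (hγ : DifferentiableAt ℝ γ q)
    (hsymm : ∀ x y : E, fderiv ℝ γ q x y = fderiv ℝ γ q y x) :
    fderiv ℝ (fun q' => H (q', γ q')) q
      = fderiv ℝ γ q (XH (q, γ q)).1 - (XH (q, γ q)).2 := by
  ext x
  simp [fderiv_comp_graph hH hγ, ← hXH, canSymp, hsymm x]

theorem geometric_hamilton_jacobi_general
    {E : Type*} [NormedAddCommGroup E] [NormedSpace ℝ E]
    (H : E × (E →L[ℝ] ℝ) → ℝ) (hH : ContDiff ℝ 1 H)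
    (XH : E × (E →L[ℝ] ℝ) → E × (E →L[ℝ] ℝ))
    (hXH : ∀ z v, canSymp E (XH z) v = fderiv ℝ H z v)
    (γ : E → E →L[ℝ] ℝ) (hγ : ContDiff ℝ 1 γ)
    (hclosed : ∀ q x y : E, fderiv ℝ γ q x y - fderiv ℝ γ q y x = 0) :
    (∀ q : E,
        (((XH (q, γ q)).1, fderiv ℝ γ q ((XH (q, γ q)).1)) : E × (E →L[ℝ] ℝ))
          = XH (q, γ q))
    ↔ (∀ q : E, fderiv ℝ (fun q' : E => H (q', γ q')) q = 0) := by
  refine forall_congr' fun q => ?_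
  have hsymm : ∀ x y : E, fderiv ℝ γ q x y = fderiv ℝ γ q y x :=
    fun x y => sub_eq_zero.mp (hclosed q x y)
  rw [fderiv_hamiltonian_comp_section hXH (hH.differentiable one_ne_zero _)
    (hγ.differentiable one_ne_zero q) hsymm, sub_eq_zero, Prod.ext_iff]
  simp

/-- Geometric Hamilton–Jacobi theorem: for a C¹ Hamiltonian `H` on `T*E ≅ E × E*`
with Hamiltonian vector field `X_H = (X¹, X²)`, and a C¹ closed one-form
`γ : E → E*`, set `X_H^γ(q) = X¹(q, γ(q))`. Then the following are equivalent:
(i) `X_H^γ` and `X_H` are `γ`-related: `Dγ̃(q)(X_H^γ(q)) = X_H(q, γ(q))` for all `q`;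
(ii) `d(H ∘ γ̃) = 0`, i.e. `q ↦ H(q, γ(q))` has vanishing derivative. -/
theorem geometric_hamilton_jacobi
    {E : Type*} [NormedAddCommGroup E] [NormedSpace ℝ E] [FiniteDimensional ℝ E]
    (H : E × (E →L[ℝ] ℝ) → ℝ) (hH : ContDiff ℝ 1 H)
    (XH : E × (E →L[ℝ] ℝ) → E × (E →L[ℝ] ℝ))
    (hXH : ∀ z v, canSymp E (XH z) v = fderiv ℝ H z v)
    (γ : E → E →L[ℝ] ℝ) (hγ : ContDiff ℝ 1 γ)
    (hclosed : ∀ q x y : E, fderiv ℝ γ q x y - fderiv ℝ γ q y x = 0) :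
    (∀ q : E,
        (((XH (q, γ q)).1, fderiv ℝ γ q ((XH (q, γ q)).1)) : E × (E →L[ℝ] ℝ))
          = XH (q, γ q))
    ↔ (∀ q : E, fderiv ℝ (fun q' : E => H (q', γ q')) q = 0) :=
  geometric_hamilton_jacobi_general H hH XH hXH γ hγ hclosed
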